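/- arXiv:1308.2113 — 3 statements merged into one kernel-verified Lean document; each statement's English description precedes it below -/
import Mathlib

section
/- Let K ⊂ ℝ² be a nondegenerate triangle with edge lengths A, B, C and area S. Then A²B²C²/(16S²) > (A² + B² + C²)/30 + (S²/5)(1/A² + 1/B² + 1/C²); in particular the constant C(K) := √(A²B²C²/(16S²) − (A² + B² + C²)/30 − (S²/5)(1/A² + 1/B² + 1/C²)) is a well-defined positive real number and satisfies C(K) < R_K, where R_K = ABC/(4S) is the circumradius of K. -/
noncomputable section
open MeasureTheory Real Filter
open scoped ENNReal

/-- The Euclidean plane `ℝ²`. -/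
abbrev E2 : Type := EuclideanSpace ℝ (Fin 2)

/-- `f'` is a weak (distributional) derivative of `f` on the set `U ⊆ ℝ²`:
integration by parts against all smooth test functions compactly supported in `U`. -/
def IsWeakFDerivOn {F : Type} [NormedAddCommGroup F] [NormedSpace ℝ F]
    (U : Set E2) (f : E2 → F) (f' : E2 → (E2 →L[ℝ] F)) : Prop :=
  ∀ φ : E2 → ℝ, ContDiff ℝ (⊤ : ℕ∞) φ → HasCompactSupport φ → tsupport φ ⊆ U →
    ∫ x in U, φ x • f' x = - ∫ x in U, (fderiv ℝ φ x).smulRight (f x)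

/-- The (closed) triangle with vertices `p 0`, `p 1`, `p 2`. -/
def Tri (p : Fin 3 → E2) : Set E2 := convexHull ℝ (Set.range p)

/-- The circumradius of a nondegenerate triangle. -/
def circumradius3 (p : Fin 3 → E2) (hp : AffineIndependent ℝ p) : ℝ :=
  (Affine.Simplex.mk p hp).circumradius

/-- The standard basis vectors of `ℝ²`. -/
def e2 (i : Fin 2) : E2 := EuclideanSpace.single i 1

/-- Squared Euclidean norm of the gradient (represented as a continuous linear functional). -/
def gradNormSq (a : E2 →L[ℝ] ℝ) : ℝ := ∑ i, (a (e2 i))^2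

/-- Squared Frobenius norm of the Hessian (all second derivatives). -/
def hessNormSq (H : E2 →L[ℝ] E2 →L[ℝ] ℝ) : ℝ := ∑ i, ∑ j, (H (e2 i) (e2 j))^2

/-- The point `(x, y) ∈ ℝ²`. -/
def pt (x y : ℝ) : E2 := WithLp.toLp 2 ![x, y]

/-- The (unsigned) area of the triangle with vertices `p 0`, `p 1`, `p 2`. -/
def triArea (p : Fin 3 → E2) : ℝ :=
  |(p 1 0 - p 0 0) * (p 2 1 - p 0 1) - (p 1 1 - p 0 1) * (p 2 0 - p 0 0)| / 2


/-!
Write `R² = A²B²C²/(16S²)` for the squared circumradius and use Heron's formula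
`16S² = 2A²B² + 2B²C² + 2C²A² - A⁴ - B⁴ - C⁴`. Substituted into `A² + B² + C² ≤ 9R²`,
Heron's formula turns it into Schur's inequality for `A², B², C²`. The squared altitude
`4S²/A²` onto side `A` is at most `(B² + C²)/2`, so the `S²`-term is at most
`(A² + B² + C²)/20`. Hence the left-hand side is at most `(A² + B² + C²)/12 < R²`.
-/

theorem schur_inequality {R : Type*} [CommRing R] [LinearOrder R] [IsStrictOrderedRing R]
    {u v w : R} (hu : 0 ≤ u) (hv : 0 ≤ v) (hw : 0 ≤ w) :
    0 ≤ u * (u - v) * (u - w) + v * (v - u) * (v - w) + w * (w - u) * (w - v) := by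
  wlog hvu : v ≤ u generalizing u v
  · linarith [this hv hu (le_of_not_ge hvu)]
  wlog hwu : w ≤ u generalizing u v w
  · rw [not_le] at hwu
    linarith [this hu hw hv (by linarith) hwu.le]
  wlog hwv : w ≤ v generalizing v w
  · rw [not_le] at hwv
    linarith [this hv hw hwu hvu hwv.le]
  nlinarith [mul_nonneg (mul_nonneg hw (sub_nonneg.2 hwu)) (sub_nonneg.2 hwv),
    mul_nonneg (sq_nonneg (u - v)) (by linarith : 0 ≤ u + v - w)]

section Heron

variable {A B C S : ℝ}

theorem sq_div_sq_le_of_heron (hA : 0 < A)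
    (heron : 16 * S ^ 2 = 2 * A ^ 2 * B ^ 2 + 2 * B ^ 2 * C ^ 2 + 2 * C ^ 2 * A ^ 2
      - A ^ 4 - B ^ 4 - C ^ 4) :
    S ^ 2 / A ^ 2 ≤ (B ^ 2 + C ^ 2) / 8 := by
  rw [div_le_iff₀ (by positivity)]
  nlinarith [sq_nonneg (B ^ 2 - C ^ 2), pow_nonneg (sq_nonneg A) 2]

theorem sum_sq_mul_le_of_heron
    (heron : 16 * S ^ 2 = 2 * A ^ 2 * B ^ 2 + 2 * B ^ 2 * C ^ 2 + 2 * C ^ 2 * A ^ 2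
      - A ^ 4 - B ^ 4 - C ^ 4) :
    16 * S ^ 2 * (A ^ 2 + B ^ 2 + C ^ 2) ≤ 9 * A ^ 2 * B ^ 2 * C ^ 2 := by
  rw [heron]
  linear_combination schur_inequality (sq_nonneg A) (sq_nonneg B) (sq_nonneg C)

theorem kobayashi_bound_of_heron (hA : 0 < A) (hB : 0 < B) (hC : 0 < C) (hS : 0 < S)
    (heron : 16 * S ^ 2 = 2 * A ^ 2 * B ^ 2 + 2 * B ^ 2 * C ^ 2 + 2 * C ^ 2 * A ^ 2
      - A ^ 4 - B ^ 4 - C ^ 4) :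
    (A^2 + B^2 + C^2)/30 + S^2/5 * (1/A^2 + 1/B^2 + 1/C^2) < A^2*B^2*C^2/(16*S^2) := by
  have hA' := sq_div_sq_le_of_heron hA heron
  have hB' := sq_div_sq_le_of_heron (A := B) (B := C) (C := A) (S := S) hB
    (by linear_combination heron)
  have hC' := sq_div_sq_le_of_heron (A := C) (B := A) (C := B) (S := S) hC
    (by linear_combination heron)
  have hR : (A ^ 2 + B ^ 2 + C ^ 2) / 9 ≤ A ^ 2 * B ^ 2 * C ^ 2 / (16 * S ^ 2) := by
    rw [div_le_div_iff₀ (by norm_num) (by positivity)]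
    linarith [sum_sq_mul_le_of_heron heron]
  have hsum : 0 < A ^ 2 + B ^ 2 + C ^ 2 := by positivity
  calc (A^2 + B^2 + C^2)/30 + S^2/5 * (1/A^2 + 1/B^2 + 1/C^2)
      = (A^2 + B^2 + C^2)/30 + (S^2/A^2 + S^2/B^2 + S^2/C^2)/5 := by ring
    _ ≤ (A ^ 2 + B ^ 2 + C ^ 2) / 12 := by linarith
    _ < (A ^ 2 + B ^ 2 + C ^ 2) / 9 := by linarith
    _ ≤ A^2*B^2*C^2/(16*S^2) := hR

end Heron

theorem dist_sq_eq_fin_two (x y : EuclideanSpace ℝ (Fin 2)) :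
    dist x y ^ 2 = (x 0 - y 0) ^ 2 + (x 1 - y 1) ^ 2 := by
  rw [EuclideanSpace.dist_eq, Real.sq_sqrt (by positivity)]
  simp [Fin.sum_univ_two, Real.dist_eq, sq_abs]

theorem triArea_heron (p : Fin 3 → E2) :
    16 * triArea p ^ 2 = 2 * dist (p 1) (p 2) ^ 2 * dist (p 2) (p 0) ^ 2
      + 2 * dist (p 2) (p 0) ^ 2 * dist (p 0) (p 1) ^ 2 + 2 * dist (p 0) (p 1) ^ 2 * dist (p 1) (p 2) ^ 2
      - dist (p 1) (p 2) ^ 4 - dist (p 2) (p 0) ^ 4 - dist (p 0) (p 1) ^ 4 := by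
  have h4 (x y : E2) : dist x y ^ 4 = (dist x y ^ 2) ^ 2 := by ring
  simp only [h4, dist_sq_eq_fin_two]
  rw [triArea, div_pow, sq_abs]
  ring

theorem triArea_pos {p : Fin 3 → E2} (hp : AffineIndependent ℝ p) : 0 < triArea p := by
  refine div_pos (abs_pos.2 fun hdet => ?_) two_pos
  -- a kernel vector `c` of the edge matrix yields the affine dependence `(-c 0 - c 1, c 0, c 1)`
  obtain ⟨c, hc0, hc⟩ := (Matrix.exists_mulVec_eq_zero_iff
    (M := !![p 1 0 - p 0 0, p 2 0 - p 0 0; p 1 1 - p 0 1, p 2 1 - p 0 1])).2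
    (by rw [Matrix.det_fin_two_of]; linear_combination hdet)
  have hw := hp.eq_zero_of_sum_eq_zero (s := Finset.univ) (w := ![-c 0 - c 1, c 0, c 1])
    (by simp [Fin.sum_univ_three]; ring)
    (by
      ext i
      have := congrFun hc i
      fin_cases i <;> simp [Fin.sum_univ_three, Matrix.mulVec, dotProduct] at this ⊢ <;>
        linear_combination this)
  exact hc0 (funext fun i => by
    fin_cases i
    exacts [hw 1 (Finset.mem_univ _), hw 2 (Finset.mem_univ _)])

/-- For a nondegenerate triangle with edge lengths `A`, `B`, `C` and area `S`,
the quantity under the square root in Kobayashi's constant is positive, so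
`C(K) = √(A²B²C²/(16S²) − (A²+B²+C²)/30 − (S²/5)(1/A²+1/B²+1/C²))` is a well-defined
positive real number, and `C(K) < R_K = ABC/(4S)`, the circumradius. -/
theorem circumradius_gt_kobayashi_const (p : Fin 3 → E2) (hp : AffineIndependent ℝ p)
    (A B C S : ℝ)
    (hA : A = dist (p 1) (p 2)) (hB : B = dist (p 2) (p 0)) (hC : C = dist (p 0) (p 1))
    (hS : S = triArea p) :
    (A^2 + B^2 + C^2)/30 + S^2/5 * (1/A^2 + 1/B^2 + 1/C^2) < A^2*B^2*C^2/(16*S^2) ∧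
    0 < Real.sqrt (A^2*B^2*C^2/(16*S^2) - (A^2 + B^2 + C^2)/30
        - S^2/5 * (1/A^2 + 1/B^2 + 1/C^2)) ∧
    Real.sqrt (A^2*B^2*C^2/(16*S^2) - (A^2 + B^2 + C^2)/30
        - S^2/5 * (1/A^2 + 1/B^2 + 1/C^2)) < A*B*C/(4*S) := by
  have hA0 : 0 < A := hA ▸ dist_pos.2 (hp.injective.ne (by decide))
  have hB0 : 0 < B := hB ▸ dist_pos.2 (hp.injective.ne (by decide))
  have hC0 : 0 < C := hC ▸ dist_pos.2 (hp.injective.ne (by decide))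
  have hS0 : 0 < S := hS ▸ triArea_pos hp
  have hlt := kobayashi_bound_of_heron hA0 hB0 hC0 hS0 (hA ▸ hB ▸ hC ▸ hS ▸ triArea_heron p)
  refine ⟨hlt, Real.sqrt_pos.2 (by linarith), ?_⟩
  rw [Real.sqrt_lt' (by positivity), show (A*B*C/(4*S))^2 = A^2*B^2*C^2/(16*S^2) by ring]
  have hpos : 0 < (A^2 + B^2 + C^2)/30 + S^2/5 * (1/A^2 + 1/B^2 + 1/C^2) := by positivity
  linarith
end
end

section
/- For 0 < h < 1 and 1 < α < 2, let K_h ⊂ ℝ² be the isosceles triangle with base of length h and apex at height h^α above the midpoint of the base (so h^α < h). Then the circumradius of K_h equals R_{K_h} = h^α/2 + h^{2−α}/8, and R_{K_h} → 0 as h → 0⁺, while the maximum interior angle of K_h (the apex angle) tends to π as h → 0⁺. In particular the family {K_h} violates every maximum angle condition yet satisfies the circumradius condition. -/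
noncomputable section
open MeasureTheory Real Filter
open scoped ENNReal

/-!
The circumcenter of the triangle with vertices `(∓w, 0)`, `(0, t)` lies on its axis of symmetry
at height `(t² - w²) / (2t)`, so its circumradius is `(t² + w²) / (2t)`; for `w = h/2`,
`t = h^α` this is `h^α/2 + h^(2-α)/8`, a sum of two positive powers of `h`. The cosine of the
apex angle is `((t/w)² - 1) / ((t/w)² + 1)`, and `t/w = 2 h^(α-1) → 0` because `α > 1`, so the
apex angle tends to `arccos (-1) = π`.
-/

lemma dist_pt (a b c d : ℝ) : dist (pt a b) (pt c d) = √((a - c) ^ 2 + (b - d) ^ 2) := by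
  simp [EuclideanSpace.dist_eq, pt, Fin.sum_univ_two, Real.dist_eq, sq_abs]

lemma norm_pt (a b : ℝ) : ‖pt a b‖ = √(a ^ 2 + b ^ 2) := by
  simp [EuclideanSpace.norm_eq, pt, Fin.sum_univ_two, sq_abs]

lemma inner_pt (a b c d : ℝ) : inner ℝ (pt a b) (pt c d) = a * c + b * d := by
  simp [pt, PiLp.inner_apply, Fin.sum_univ_two, mul_comm]

lemma vsub_pt (a b c d : ℝ) : pt a b -ᵥ pt c d = pt (a - c) (b - d) := by
  ext i
  fin_cases i <;> simp [pt, vsub_eq_sub]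

/-- Every point of the plane lies in the affine span of a nondegenerate triangle. -/
theorem circumradius3_eq_of_dist_eq {p : Fin 3 → E2} (hp : AffineIndependent ℝ p) {c : E2}
    {r : ℝ} (hr : ∀ i, dist (p i) c = r) : circumradius3 p hp = r := by
  have hspan : affineSpan ℝ (Set.range p) = ⊤ := by
    rw [hp.affineSpan_eq_top_iff_card_eq_finrank_add_one]
    simp
  exact ((Affine.Simplex.mk p hp).eq_circumradius_of_dist_eq
    (hspan ▸ AffineSubspace.mem_top ℝ _ c) hr).symm

theorem circumradius3_isosceles {w t : ℝ} (ht : 0 < t) {p : Fin 3 → E2}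
    (hp : AffineIndependent ℝ p) (h0 : p 0 = pt (-w) 0) (h1 : p 1 = pt w 0)
    (h2 : p 2 = pt 0 t) : circumradius3 p hp = (t ^ 2 + w ^ 2) / (2 * t) := by
  have hr : 0 ≤ (t ^ 2 + w ^ 2) / (2 * t) := by positivity
  have hbase : w ^ 2 + ((t ^ 2 - w ^ 2) / (2 * t)) ^ 2 = ((t ^ 2 + w ^ 2) / (2 * t)) ^ 2 := by
    field_simp
    ring
  apply circumradius3_eq_of_dist_eq hp (c := pt 0 ((t ^ 2 - w ^ 2) / (2 * t)))
  intro i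
  fin_cases i <;> simp only [Fin.zero_eta, Fin.mk_one, Fin.reduceFinMk, h0, h1, h2, dist_pt]
  · rw [← Real.sqrt_sq hr, ← hbase]
    ring_nf
  · rw [← Real.sqrt_sq hr, ← hbase]
    ring_nf
  · rw [← Real.sqrt_sq hr]
    congr 1
    field_simp
    ring

theorem angle_isosceles_apex (w t : ℝ) :
    EuclideanGeometry.angle (pt (-w) 0) (pt 0 t) (pt w 0) =
      arccos ((t ^ 2 - w ^ 2) / (t ^ 2 + w ^ 2)) := by
  rw [EuclideanGeometry.angle, InnerProductGeometry.angle, vsub_pt, vsub_pt, inner_pt,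
    norm_pt, norm_pt, show (-w - 0) ^ 2 + (0 - t) ^ 2 = t ^ 2 + w ^ 2 by ring,
    show (w - 0) ^ 2 + (0 - t) ^ 2 = t ^ 2 + w ^ 2 by ring, Real.mul_self_sqrt (by positivity)]
  congr 1
  ring

theorem tendsto_angle_isosceles_apex_pi {ι : Type*} {l : Filter ι} {w t : ι → ℝ}
    (hw : ∀ᶠ i in l, w i ≠ 0) (hr : Tendsto (fun i => t i / w i) l (nhds 0)) :
    Tendsto (fun i => EuclideanGeometry.angle (pt (-w i) 0) (pt 0 (t i)) (pt (w i) 0)) l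
      (nhds π) := by
  have hcont : ContinuousAt (fun r : ℝ => arccos ((r ^ 2 - 1) / (r ^ 2 + 1))) 0 :=
    continuous_arccos.continuousAt.comp (by fun_prop (disch := norm_num))
  have hlim := hcont.tendsto.comp hr
  simp only [Function.comp_def] at hlim
  norm_num [arccos_neg_one] at hlim
  refine hlim.congr' ?_
  filter_upwards [hw] with i hwi
  rw [angle_isosceles_apex]
  congr 1
  field_simp

lemma tendsto_rpow_nhdsGT_zero {c : ℝ} (hc : 0 < c) :
    Tendsto (fun x : ℝ => x ^ c) (nhdsWithin 0 (Set.Ioi 0)) (nhds 0) := by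
  have h := (Real.continuousAt_rpow_const 0 c (.inr hc.le)).tendsto
  rw [Real.zero_rpow hc.ne'] at h
  exact h.mono_left nhdsWithin_le_nhds

/-- For `0 < h < 1` and `1 < α < 2`, let `K_h` be the isosceles triangle with
base of length `h` and apex at height `h^α` above the midpoint of the base (so `h^α < h`).
Its circumradius is `R_{K_h} = h^α/2 + h^{2−α}/8`, which tends to `0` as `h → 0⁺`, while the
maximum interior angle of `K_h` (the apex angle) tends to `π` as `h → 0⁺`: the family
violates every maximum angle condition but satisfies the circumradius condition. -/
theorem flat_isosceles_family (α : ℝ) (hα1 : 1 < α) (hα2 : α < 2)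
    (p : ℝ → Fin 3 → E2)
    (hdef : ∀ h : ℝ, p h 0 = pt (-(h/2)) 0 ∧ p h 1 = pt (h/2) 0 ∧ p h 2 = pt 0 (h ^ α))
    (hind : ∀ h ∈ Set.Ioo (0:ℝ) 1, AffineIndependent ℝ (p h)) :
    (∀ h : ℝ, 0 < h → h < 1 → h ^ α < h) ∧
    (∀ h, ∀ hh : h ∈ Set.Ioo (0:ℝ) 1,
      circumradius3 (p h) (hind h hh) = h ^ α / 2 + h ^ (2 - α) / 8) ∧
    Tendsto (fun h : ℝ => h ^ α / 2 + h ^ (2 - α) / 8) (nhdsWithin 0 (Set.Ioi 0)) (nhds 0) ∧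
    Tendsto (fun h : ℝ => EuclideanGeometry.angle (p h 0) (p h 2) (p h 1))
      (nhdsWithin 0 (Set.Ioi 0)) (nhds π) := by
  refine ⟨fun h h0 h1 => by simpa using Real.rpow_lt_rpow_of_exponent_gt h0 h1 hα1, ?_, ?_, ?_⟩
  · rintro h hh
    obtain ⟨h0, h1, h2⟩ := hdef h
    have ha : 0 < h ^ α := Real.rpow_pos_of_pos hh.1 α
    rw [circumradius3_isosceles ha _ h0 h1 h2, Real.rpow_sub hh.1, Real.rpow_two]
    field_simp
    ring
  · simpa using ((tendsto_rpow_nhdsGT_zero (by linarith : 0 < α)).div_const 2).add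
      ((tendsto_rpow_nhdsGT_zero (by linarith : 0 < 2 - α)).div_const 8)
  · have hpos : ∀ᶠ h in nhdsWithin (0:ℝ) (Set.Ioi 0), 0 < h := self_mem_nhdsWithin
    have hlim : Tendsto (fun h : ℝ => 2 * h ^ (α - 1)) (nhdsWithin 0 (Set.Ioi 0)) (nhds 0) := by
      simpa using (tendsto_rpow_nhdsGT_zero (by linarith : 0 < α - 1)).const_mul 2
    have hratio :
        Tendsto (fun h : ℝ => h ^ α / (h / 2)) (nhdsWithin 0 (Set.Ioi 0)) (nhds 0) := by
      refine hlim.congr' ?_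
      filter_upwards [hpos] with h h0
      rw [Real.rpow_sub h0, Real.rpow_one]
      field_simp
    refine (tendsto_angle_isosceles_apex_pi (hpos.mono fun h h0 => by positivity) hratio).congr' ?_
    filter_upwards with h
    obtain ⟨h0, h1, h2⟩ := hdef h
    rw [h0, h1, h2]
end
end

section
/- (Schwarz's example, circumradius) Let r > 0, H > 0 and positive integers m, n. The circumradius R(m,n) of each isosceles triangle in Schwarz's example (base length 2r sin(π/n), height √((H/m)² + r²(1 − cos(π/n))²)) equals ( H²/m + π²r²·(m/n²)·(sin(π/(2n))/(π/(2n)))² ) / ( 2√( H² + (π⁴r²/4)(m/n²)²(sin(π/(2n))/(π/(2n)))⁴ ) ). Moreover, for sequences m_k → ∞, n_k → ∞ of positive integers, R(m_k,n_k) → 0 if and only if m_k/n_k² → 0. -/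
noncomputable section
open MeasureTheory Real Filter
open scoped ENNReal

/-- The total area of the inscribed polygonal surface in Schwarz's example for the cylinder
of radius `r` and height `H`: `2mn` congruent isosceles triangles, each of base
`2r sin(π/n)` and height `√((H/m)² + r²(1 − cos(π/n))²)`. -/
def schwarzArea (r H : ℝ) (m n : ℕ) : ℝ :=
  2 * (m:ℝ) * (n:ℝ) * r * Real.sin (π / n) *
    Real.sqrt ((H / m)^2 + r^2 * (1 - Real.cos (π / n))^2)

/-- The circumradius of an isosceles triangle with base `b` and height `t`. -/
def isoCircumradius (b t : ℝ) : ℝ := t/2 + b^2/(8*t)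

/-- The circumradius of each isosceles triangle in Schwarz's example. -/
def schwarzCircumradius (r H : ℝ) (m n : ℕ) : ℝ :=
  isoCircumradius (2 * r * Real.sin (π / n))
    (Real.sqrt ((H / m)^2 + r^2 * (1 - Real.cos (π / n))^2))

/-!
With `s = sin (π/(2n))`, the half-angle formulas give base² `b² = 16r²s²(1 - s²)` and
height² `t² = (H/m)² + 4r²s⁴`, so with `u = m s²` the circumradius
`t/2 + b²/(8t) = (4t² + b²)/(8t)` becomes `(H²/m + 4r²u) / (2√(H² + 4r²u²))`; the stated
formula is this with `u = (π²/4)(m/n²)(sin x / x)²`, `x = π/(2n)`. For `m → ∞` this is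
squeezed between `r²u/H` (once `R ≤ r/2`) and `H/(2m) + (2r²/H)u`, so `R → 0` iff `u → 0`;
and `u ~ (π²/4) m/n²` because `sin x ~ x`.
-/

open Topology Asymptotics

lemma isoCircumradius_eq_div (b t : ℝ) : isoCircumradius b t = (4 * t ^ 2 + b ^ 2) / (8 * t) := by
  rcases eq_or_ne t 0 with rfl | ht
  · simp [isoCircumradius]
  · rw [isoCircumradius]
    field_simp
    ring

lemma isoCircumradius_nonneg (b : ℝ) {t : ℝ} (ht : 0 ≤ t) : 0 ≤ isoCircumradius b t := by
  rw [isoCircumradius]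
  positivity

lemma schwarzCircumradius_nonneg (r H : ℝ) (m n : ℕ) : 0 ≤ schwarzCircumradius r H m n :=
  isoCircumradius_nonneg _ (Real.sqrt_nonneg _)

/-- `R(m, n)` depends on `n` only through this quantity, asymptotic to `(π²/4) m/n²`. -/
def schwarzRatio (m n : ℕ) : ℝ := m * sin (π / (2 * n)) ^ 2

lemma schwarzRatio_nonneg (m n : ℕ) : 0 ≤ schwarzRatio m n := by
  rw [schwarzRatio]
  positivity

lemma schwarzRatio_eq_mul_sinc_sq (m : ℕ) {n : ℕ} (hn : n ≠ 0) :
    schwarzRatio m n =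
      π ^ 2 / 4 * ((m : ℝ) / (n : ℝ) ^ 2) * (sin (π / (2 * n)) / (π / (2 * n))) ^ 2 := by
  rw [schwarzRatio]
  field_simp
  ring

lemma schwarzCircumradius_eq (r : ℝ) {H : ℝ} (hH : H ≠ 0) {m : ℕ} (hm : 0 < m) (n : ℕ) :
    schwarzCircumradius r H m n =
      (H ^ 2 / m + 4 * r ^ 2 * schwarzRatio m n) /
        (2 * √(H ^ 2 + 4 * r ^ 2 * schwarzRatio m n ^ 2)) := by
  have hm' : (0 : ℝ) < m := by exact_mod_cast hm
  set s := sin (π / (2 * n))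
  have hhalf : π / n = 2 * (π / (2 * n)) := by ring
  have hcos : 1 - cos (π / n) = 2 * s ^ 2 := by
    rw [sin_sq_eq_half_sub, ← hhalf]
    ring
  have hsin : sin (π / n) ^ 2 = 4 * s ^ 2 * (1 - s ^ 2) := by
    rw [sin_sq, ← sub_eq_zero, show cos (π / n) = 1 - 2 * s ^ 2 by linarith]
    ring
  have hsqrt : √((H / m) ^ 2 + r ^ 2 * (1 - cos (π / n)) ^ 2) =
      √(H ^ 2 + 4 * r ^ 2 * schwarzRatio m n ^ 2) / m := by
    rw [hcos, schwarzRatio, ← Real.sqrt_sq hm'.le, ← Real.sqrt_div' _ (sq_nonneg _),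
      Real.sqrt_sq hm'.le]
    congr 1
    field_simp
    ring
  have hpos : 0 < H ^ 2 + 4 * r ^ 2 * schwarzRatio m n ^ 2 := by positivity
  rw [schwarzCircumradius, isoCircumradius_eq_div, hsqrt, div_pow, Real.sq_sqrt hpos.le, mul_pow,
    hsin, schwarzRatio]
  field_simp
  ring

lemma schwarzCircumradius_le (r : ℝ) {H : ℝ} (hH : 0 < H) {m : ℕ} (hm : 0 < m) (n : ℕ) :
    schwarzCircumradius r H m n ≤ H / (2 * m) + 2 * r ^ 2 / H * schwarzRatio m n := by
  have hm' : (0 : ℝ) < m := by exact_mod_cast hm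
  have hu := schwarzRatio_nonneg m n
  have hsqrt : H ≤ √(H ^ 2 + 4 * r ^ 2 * schwarzRatio m n ^ 2) :=
    Real.le_sqrt_of_sq_le (by nlinarith [sq_nonneg (r * schwarzRatio m n)])
  calc schwarzCircumradius r H m n
      ≤ (H ^ 2 / m + 4 * r ^ 2 * schwarzRatio m n) / (2 * H) := by
        rw [schwarzCircumradius_eq r hH.ne' hm n]
        gcongr
    _ = H / (2 * m) + 2 * r ^ 2 / H * schwarzRatio m n := by
        field_simp
        ring

lemma sq_mul_schwarzRatio_le {r H : ℝ} (hr : 0 < r) (hH : 0 < H) {m : ℕ} (hm : 0 < m) (n : ℕ)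
    (hR : schwarzCircumradius r H m n ≤ r / 2) :
    r ^ 2 * schwarzRatio m n ≤ H * schwarzCircumradius r H m n := by
  have hR_eq := schwarzCircumradius_eq r hH.ne' hm n
  set u := schwarzRatio m n
  set R := schwarzCircumradius r H m n
  have hu : 0 ≤ u := schwarzRatio_nonneg m n
  have hR0 : 0 ≤ R := schwarzCircumradius_nonneg r H m n
  have hsqrt : √(H ^ 2 + 4 * r ^ 2 * u ^ 2) ≤ H + 2 * r * u :=
    Real.sqrt_le_iff.2 ⟨by positivity, by nlinarith [mul_nonneg (mul_nonneg hH.le hr.le) hu]⟩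
  have hRu : 4 * r ^ 2 * u ≤ 2 * R * √(H ^ 2 + 4 * r ^ 2 * u ^ 2) := by
    have hRdef : R * (2 * √(H ^ 2 + 4 * r ^ 2 * u ^ 2)) = H ^ 2 / m + 4 * r ^ 2 * u := by
      rw [hR_eq, div_mul_cancel₀ _ (by positivity)]
    have : 0 ≤ H ^ 2 / m := by positivity
    linarith
  nlinarith [mul_le_mul_of_nonneg_left hsqrt hR0, mul_le_mul_of_nonneg_right hR hu]

lemma tendsto_const_div_two_mul_natCast {α : Type*} {l : Filter α} (c : ℝ) {n : α → ℕ}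
    (hn : Tendsto n l atTop) : Tendsto (fun k => c / (2 * (n k : ℝ))) l (𝓝 0) :=
  tendsto_const_nhds.div_atTop ((tendsto_natCast_atTop_atTop.comp hn).const_mul_atTop two_pos)

lemma tendsto_schwarzCircumradius_zero_iff {r H : ℝ} (hr : 0 < r) (hH : 0 < H) {m n : ℕ → ℕ}
    (hm : Tendsto m atTop atTop) :
    Tendsto (fun k => schwarzCircumradius r H (m k) (n k)) atTop (𝓝 0) ↔
      Tendsto (fun k => schwarzRatio (m k) (n k)) atTop (𝓝 0) := by
  have hm_pos : ∀ᶠ k in atTop, 0 < m k := hm.eventually_gt_atTop 0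
  constructor
  · intro hR
    have hbound : ∀ᶠ k in atTop, schwarzRatio (m k) (n k) ≤
        H / r ^ 2 * schwarzCircumradius r H (m k) (n k) := by
      filter_upwards [hm_pos, hR.eventually_lt_const (half_pos hr)] with k hk hRk
      rw [div_mul_eq_mul_div, le_div_iff₀ (by positivity), mul_comm]
      exact sq_mul_schwarzRatio_le hr hH hk (n k) hRk.le
    have hupper : Tendsto (fun k => H / r ^ 2 * schwarzCircumradius r H (m k) (n k))
        atTop (𝓝 0) := by simpa using hR.const_mul (H / r ^ 2)
    exact tendsto_of_tendsto_of_tendsto_of_le_of_le' tendsto_const_nhds hupper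
      (.of_forall fun k => schwarzRatio_nonneg _ _) hbound
  · intro hu
    have hupper : Tendsto (fun k => H / (2 * (m k : ℝ)) + 2 * r ^ 2 / H * schwarzRatio (m k) (n k))
        atTop (𝓝 0) := by
      simpa using (tendsto_const_div_two_mul_natCast H hm).add (hu.const_mul (2 * r ^ 2 / H))
    exact tendsto_of_tendsto_of_tendsto_of_le_of_le' tendsto_const_nhds hupper
      (.of_forall fun k => schwarzCircumradius_nonneg _ _ _ _)
      (hm_pos.mono fun k hk => schwarzCircumradius_le r hH hk (n k))

lemma tendsto_schwarzRatio_zero_iff {m n : ℕ → ℕ} (hn : Tendsto n atTop atTop) :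
    Tendsto (fun k => schwarzRatio (m k) (n k)) atTop (𝓝 0) ↔
      Tendsto (fun k => (m k : ℝ) / (n k : ℝ) ^ 2) atTop (𝓝 0) := by
  have hangle := tendsto_const_div_two_mul_natCast π hn
  have hequiv : (fun k => schwarzRatio (m k) (n k)) ~[atTop]
      fun k => (π ^ 2 / 4) • ((m k : ℝ) / (n k : ℝ) ^ 2) :=
    (IsEquivalent.refl.mul ((isEquivalent_sin.comp_tendsto hangle).pow 2)).congr_right
      (.of_forall fun k => by
        simp only [Pi.mul_apply, Pi.pow_apply, Function.comp_apply, id, smul_eq_mul]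
        ring)
  have hscale := tendsto_const_smul_iff₀ (l := atTop) (f := fun k => (m k : ℝ) / (n k : ℝ) ^ 2)
    (a := 0) (show π ^ 2 / 4 ≠ 0 by positivity)
  rwa [smul_zero, ← hequiv.tendsto_nhds_iff] at hscale

/-- **Schwarz's example, circumradius.** For `r, H > 0` and positive integers
`m`, `n`, the circumradius `R(m,n)` of each isosceles triangle of Schwarz's example
(base `2r sin(π/n)`, height `√((H/m)² + r²(1 − cos(π/n))²)`; its circumradius is
height/2 + base²/(8·height)) equals
`(H²/m + π²r²(m/n²)(sin(π/(2n))/(π/(2n)))²) / (2√(H² + (π⁴r²/4)(m/n²)²(sin(π/(2n))/(π/(2n)))⁴))`.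
Moreover, for sequences of positive integers `m_k, n_k → ∞`, `R(m_k, n_k) → 0` if and only if
`m_k/n_k² → 0`. -/
theorem schwarz_circumradius (r H : ℝ) (hr : 0 < r) (hH : 0 < H) :
    (∀ m n : ℕ, 0 < m → 0 < n →
      schwarzCircumradius r H m n
        = (H^2 / m + π^2 * r^2 * ((m:ℝ) / (n:ℝ)^2) *
              (Real.sin (π / (2*n)) / (π / (2*n)))^2)
          / (2 * Real.sqrt (H^2 + (π^4 * r^2 / 4) * ((m:ℝ) / (n:ℝ)^2)^2 *
              (Real.sin (π / (2*n)) / (π / (2*n)))^4))) ∧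
    (∀ m n : ℕ → ℕ, Tendsto m atTop atTop → Tendsto n atTop atTop →
      (Tendsto (fun k => schwarzCircumradius r H (m k) (n k)) atTop (nhds 0) ↔
        Tendsto (fun k => (m k : ℝ) / (n k : ℝ)^2) atTop (nhds 0))) := by
  refine ⟨fun m n hm hn => ?_, fun m n hm hn =>
    (tendsto_schwarzCircumradius_zero_iff hr hH hm).trans (tendsto_schwarzRatio_zero_iff hn)⟩
  rw [schwarzCircumradius_eq r hH.ne' hm n, schwarzRatio_eq_mul_sinc_sq m hn.ne']
  ring_nf
end
end
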